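/- Let M be a map with an angle function, of perimeter n ≥ 1, such that the curvatures of all faces and of all interior vertices of M are non-positive. Then nπ ≥ −I_f − I_v^i + 2π, where I_f is the sum of the curvatures of all faces of M and I_v^i is the sum of the curvatures of all interior vertices of M. -/

import Mathlib

open scoped Classical

/-- An abstract combinatorial model of a finite map (a finite, connected and
simply-connected 2-complex embedded in the Euclidean plane), encoded by its
oriented edges (darts), vertices and faces, the boundary cycles of its faces,
its outer boundary cycle, and Euler's formula. -/
structure PMap where
  V : Type
  E : Type
  F : Type
  [vfin : Fintype V]
  [efin : Fintype E]
  [ffin : Fintype F]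
  [vdec : DecidableEq V]
  [edec : DecidableEq E]
  [fdec : DecidableEq F]
  /-- the inverse (oppositely oriented) edge -/
  inv : E → E
  inv_inv : ∀ e, inv (inv e) = e
  inv_ne : ∀ e, inv e ≠ e
  /-- the initial vertex of an oriented edge -/
  src : E → V
  /-- the boundary path of a face: a closed nonempty edge path -/
  bFace : F → List E
  bFace_ne : ∀ f, bFace f ≠ []
  bFace_chain : ∀ f, (bFace f).Chain' fun a b => src (inv a) = src b
  bFace_closed : ∀ f, ∀ a ∈ (bFace f).head?, ∀ b ∈ (bFace f).getLast?, src (inv b) = src a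
  /-- the boundary path of the map: a closed edge path -/
  boundary : List E
  boundary_chain : boundary.Chain' fun a b => src (inv a) = src b
  boundary_closed : ∀ a ∈ boundary.head?, ∀ b ∈ boundary.getLast?, src (inv b) = src a
  /-- every oriented edge occurs exactly once: either in the boundary cycle of
  exactly one face, or in the outer boundary cycle of the map -/
  dart_partition : ∀ e : E, boundary.count e + ∑ f : F, (bFace f).count e = 1
  /-- Euler's formula `V - E + F = 1` (each non-oriented edge is a pair of darts) -/
  euler : 2 * Fintype.card V + 2 * Fintype.card F = Fintype.card E + 2

attribute [instance] PMap.vfin PMap.efin PMap.ffin PMap.vdec PMap.edec PMap.fdec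

namespace PMap

variable (M : PMap)

/-- The terminal vertex of an oriented edge. -/
def tgt (e : M.E) : M.V := M.src (M.inv e)

/-- The degree of a vertex: the number of oriented edges starting at it. -/
def vdeg (o : M.V) : ℕ := (Finset.univ.filter fun e : M.E => M.src e = o).card

/-- The degree of a face: the length of its boundary path. -/
def fdeg (f : M.F) : ℕ := (M.bFace f).length

/-- The perimeter of the map: the length of its boundary path. -/
def perimeter : ℕ := M.boundary.length

/-- The area of the map: the number of its faces. -/
def area : ℕ := Fintype.card M.F

/-- The multiplicity of a vertex: the number of times the boundary path of the
map passes through it. -/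
def mult (o : M.V) : ℕ := (M.boundary.map M.src).count o

/-- The exterior vertices: the vertices of the boundary path. -/
def extVerts : Finset M.V := (M.boundary.map M.src).toFinset

/-- A vertex is exterior if it lies on the boundary path; otherwise interior. -/
def IsExtV (o : M.V) : Prop := o ∈ M.extVerts

/-- An edge is exterior if it belongs to the boundary path of the map. -/
def IsExtEdge (e : M.E) : Prop := e ∈ M.boundary ∨ M.inv e ∈ M.boundary

/-- A face is exterior if its boundary shares an edge with the boundary of the map. -/
def IsExtFace (f : M.F) : Prop := ∃ e ∈ M.bFace f, M.IsExtEdge e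

/-- A face is weakly exterior if it shares a vertex with the boundary of the map. -/
def IsWeaklyExtFace (f : M.F) : Prop := ∃ e ∈ M.bFace f, M.src e ∈ M.extVerts

/-- A face is strongly interior if it shares no vertex with the boundary of the map. -/
def StronglyInterior (f : M.F) : Prop := ¬ M.IsWeaklyExtFace f

/-- A `(p,q)`-map: every interior face has degree at least `p` and every
interior vertex has degree at least `q`. -/
def IsPQ (p q : ℕ) : Prop :=
  (∀ f, ¬ M.IsExtFace f → p ≤ M.fdeg f) ∧ (∀ o, ¬ M.IsExtV o → q ≤ M.vdeg o)

/-- A `{p,q}`-map: a `(p,q)`-map in which every face has degree at least `p`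
and less than `2p`, and every vertex has degree less than `2q`. -/
def IsBracePQ (p q : ℕ) : Prop :=
  M.IsPQ p q ∧ (∀ f, p ≤ M.fdeg f ∧ M.fdeg f < 2 * p) ∧ (∀ o, M.vdeg o < 2 * q)

/-- The map is simple if its boundary path is a simple closed curve. -/
def IsSimple : Prop := (M.boundary.map M.src).Nodup

/-- The `1`-skeleton of the map, as a simple graph. -/
def skel : SimpleGraph M.V where
  Adj u v := u ≠ v ∧ ∃ e, M.src e = u ∧ M.tgt e = v
  symm := ⟨by
    rintro u v ⟨huv, e, h1, h2⟩
    refine ⟨huv.symm, M.inv e, h2, ?_⟩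
    show M.src (M.inv (M.inv e)) = u
    rw [M.inv_inv]; exact h1⟩
  loopless := ⟨by rintro u ⟨h, -⟩; exact h rfl⟩

/-- The combinatorial path metric on the 1-skeleton. -/
noncomputable def dist (u v : M.V) : ℕ := M.skel.dist u v

/-- The distance from a vertex to the boundary of the map. -/
noncomputable def distToBoundary (o : M.V) : ℕ :=
  sInf {d | ∃ b, M.IsExtV b ∧ M.dist o b = d}

/-- The radius of the map: the maximal distance from a vertex to the boundary. -/
noncomputable def radius : ℕ := sSup {d | ∃ o, M.distToBoundary o = d}

/-- The `(p,q)`-curvature `p - d(Π)` of a face. -/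
noncomputable def faceCurv (p : ℝ) (f : M.F) : ℝ := p - M.fdeg f

/-- The `(p,q)`-curvature `(p/q)(q - d(o)) - μ(o)` of a vertex. -/
noncomputable def vertCurv (p q : ℝ) (o : M.V) : ℝ :=
  p / q * (q - M.vdeg o) - M.mult o

/-- A flat map (submap) of curvature type `(p,q)`: every face has degree
exactly `p` and every interior vertex has degree exactly `q`. -/
def IsFlat (p q : ℕ) : Prop :=
  (∀ f, M.fdeg f = p) ∧ (∀ o, ¬ M.IsExtV o → M.vdeg o = q)

end PMap

/-- An inclusion of a map `N` into a map `M` as a submap. -/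
structure SubmapIncl (N M : PMap) where
  vMap : N.V → M.V
  eMap : N.E → M.E
  fMap : N.F → M.F
  vInj : Function.Injective vMap
  eInj : Function.Injective eMap
  fInj : Function.Injective fMap
  src_comm : ∀ e, M.src (eMap e) = vMap (N.src e)
  inv_comm : ∀ e, M.inv (eMap e) = eMap (N.inv e)
  face_comm : ∀ f, M.bFace (fMap f) = (N.bFace f).map eMap

/- **Maps with angle functions.**  A corner of a face `Π` at a vertex `o` is a
pair of consecutive oriented edges `e, f` of the boundary path of `Π` with
`e₊ = f₋ = o`; thus the corners of `Π` are in bijection with the oriented edges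
of the boundary path of `Π`, a corner corresponding to the edge `e` it follows,
located at the vertex `tgt e`.  An angle function assigns a non-negative angle
to each such corner (edges on the outer boundary of the map bound no face and
carry no corner, so the angle function is required to vanish on them). -/

/-- `angle` is an angle function on the map `M`. -/
def PMap.IsAngleFunction (M : PMap) (angle : M.E → ℝ) : Prop :=
  (∀ e, 0 ≤ angle e) ∧ ∀ e ∈ M.boundary, angle e = 0

/-- `Σ_Π`: the sum of the angles of the corners of the face `f`. -/
noncomputable def PMap.faceAngleSum (M : PMap) (angle : M.E → ℝ) (f : M.F) : ℝ :=
  ((M.bFace f).map angle).sum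

/-- `Σ_o`: the sum of the angles of the corners at the vertex `o`. -/
noncomputable def PMap.vertAngleSum (M : PMap) (angle : M.E → ℝ) (o : M.V) : ℝ :=
  ∑ e : M.E, if M.tgt e = o then angle e else 0

/-- The curvature `Σ_Π − π(d − 2)` of a face `Π` of degree `d`. -/
noncomputable def PMap.faceCurvA (M : PMap) (angle : M.E → ℝ) (f : M.F) : ℝ :=
  M.faceAngleSum angle f - Real.pi * ((M.fdeg f : ℝ) - 2)

/-- The curvature `(2 − μ(o))π − Σ_o` of a vertex `o`. -/
noncomputable def PMap.vertCurvA (M : PMap) (angle : M.E → ℝ) (o : M.V) : ℝ :=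
  (2 - (M.mult o : ℝ)) * Real.pi - M.vertAngleSum angle o

/-- A `(δ,b)`-map: a map with an angle function such that the curvature of
every non-flat vertex and every non-flat face is at most `−δ`, and the degree
of every vertex and every face is at most `b`. -/
def PMap.IsDeltaB (M : PMap) (angle : M.E → ℝ) (δ : ℝ) (b : ℕ) : Prop :=
  M.IsAngleFunction angle ∧
  (∀ f : M.F, M.faceCurvA angle f = 0 ∨ M.faceCurvA angle f ≤ -δ) ∧
  (∀ o : M.V, M.vertCurvA angle o = 0 ∨ M.vertCurvA angle o ≤ -δ) ∧
  (∀ f : M.F, M.fdeg f ≤ b) ∧ (∀ o : M.V, M.vdeg o ≤ b)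


section Aux

variable {α : Type} [Fintype α] [DecidableEq α]

lemma list_sum_map_eq (l : List α) (g : α → ℝ) :
    (l.map g).sum = ∑ e : α, (l.count e : ℝ) * g e := by
  induction l with
  | nil => simp
  | cons a l ih =>
    simp only [List.map_cons, List.sum_cons, ih, List.count_cons, beq_iff_eq, Nat.cast_add,
      Nat.cast_ite, Nat.cast_one, Nat.cast_zero, add_mul, ite_mul, one_mul, zero_mul,
      Finset.sum_add_distrib, Finset.sum_ite_eq, Finset.mem_univ, if_true]
    ring

lemma list_length_eq (l : List α) :
    (l.length : ℝ) = ∑ e : α, (l.count e : ℝ) := by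
  have h := list_sum_map_eq l (fun _ => (1 : ℝ))
  simpa using h

end Aux

/-- Let `M` be a map with an angle function, of perimeter
`n ≥ 1`, such that the curvatures of all faces and of all interior vertices of
`M` are non-positive.  Then `nπ ≥ −I_f − I_v^i + 2π`, where `I_f` is the sum of
the curvatures of all faces of `M` and `I_v^i` is the sum of the curvatures of
all interior vertices of `M`. -/
theorem perimeter_pi_ge (M : PMap) (angle : M.E → ℝ) (hangle : M.IsAngleFunction angle)
    (hn : 1 ≤ M.perimeter)
    (hf : ∀ f : M.F, M.faceCurvA angle f ≤ 0)
    (hv : ∀ o : M.V, ¬ M.IsExtV o → M.vertCurvA angle o ≤ 0) :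
    (M.perimeter : ℝ) * Real.pi ≥
      -(∑ f : M.F, M.faceCurvA angle f) -
        (∑ o ∈ Finset.univ.filter fun o : M.V => ¬ M.IsExtV o, M.vertCurvA angle o) +
        2 * Real.pi := by
  classical
  obtain ⟨hnn, hb0⟩ := hangle
  set n : ℕ := M.perimeter with hndef
  -- boundary-count times angle vanishes
  have hbangle : ∀ e : M.E, (M.boundary.count e : ℝ) * angle e = 0 := by
    intro e
    by_cases he : e ∈ M.boundary
    · rw [hb0 e he, mul_zero]
    · rw [List.count_eq_zero_of_not_mem he]; simp
  have key : ∀ e : M.E, (∑ f : M.F, ((M.bFace f).count e : ℝ))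
      = 1 - (M.boundary.count e : ℝ) := by
    intro e
    have h := M.dart_partition e
    have h2 : ((M.boundary.count e : ℝ)) + ∑ f : M.F, ((M.bFace f).count e : ℝ) = 1 := by
      exact_mod_cast congrArg (fun x : ℕ => (x : ℝ)) h
    linarith
  -- total angle sum over faces
  have hS_faces : ∑ f : M.F, M.faceAngleSum angle f = ∑ e : M.E, angle e := by
    calc ∑ f : M.F, M.faceAngleSum angle f
        = ∑ f : M.F, ∑ e : M.E, ((M.bFace f).count e : ℝ) * angle e := by
          refine Finset.sum_congr rfl fun f _ => ?_
          exact list_sum_map_eq _ _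
      _ = ∑ e : M.E, (∑ f : M.F, ((M.bFace f).count e : ℝ)) * angle e := by
          rw [Finset.sum_comm]
          exact Finset.sum_congr rfl fun e _ => (Finset.sum_mul _ _ _).symm
      _ = ∑ e : M.E, angle e := by
          refine Finset.sum_congr rfl fun e _ => ?_
          rw [key e, sub_mul, one_mul, hbangle e, sub_zero]
  -- total angle sum over vertices
  have hS_vert : ∑ o : M.V, M.vertAngleSum angle o = ∑ e : M.E, angle e := by
    unfold PMap.vertAngleSum
    rw [Finset.sum_comm]
    refine Finset.sum_congr rfl fun e _ => ?_
    simp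
  -- boundary length as a sum of counts
  have hbl : (n : ℝ) = ∑ e : M.E, (M.boundary.count e : ℝ) := list_length_eq _
  -- sum of face degrees
  have hdeg : ∑ f : M.F, (M.fdeg f : ℝ) = (Fintype.card M.E : ℝ) - n := by
    calc ∑ f : M.F, (M.fdeg f : ℝ)
        = ∑ f : M.F, ∑ e : M.E, ((M.bFace f).count e : ℝ) := by
          refine Finset.sum_congr rfl fun f _ => ?_
          exact list_length_eq _
      _ = ∑ e : M.E, ∑ f : M.F, ((M.bFace f).count e : ℝ) := Finset.sum_comm
      _ = ∑ e : M.E, (1 - (M.boundary.count e : ℝ)) :=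
          Finset.sum_congr rfl fun e _ => key e
      _ = (Fintype.card M.E : ℝ) - n := by
          rw [Finset.sum_sub_distrib, ← hbl, Finset.sum_const, Finset.card_univ, nsmul_eq_mul,
            mul_one]
  -- sum of multiplicities
  have hmult : ∑ o : M.V, (M.mult o : ℝ) = n := by
    have h := list_length_eq (M.boundary.map M.src)
    unfold PMap.mult
    rw [← h]
    simp [hndef, PMap.perimeter]
  -- interior vertices have zero multiplicity
  have hmult0 : ∀ o : M.V, ¬ M.IsExtV o → M.mult o = 0 := by
    intro o ho
    have : o ∉ M.boundary.map M.src := fun h => ho (List.mem_toFinset.mpr h)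
    exact List.count_eq_zero_of_not_mem this
  -- Euler
  have heuler : 2 * (Fintype.card M.V : ℝ) + 2 * (Fintype.card M.F : ℝ)
      = (Fintype.card M.E : ℝ) + 2 := by
    exact_mod_cast congrArg (fun x : ℕ => (x : ℝ)) M.euler
  -- total curvature identity
  have hIf : ∑ f : M.F, M.faceCurvA angle f
      = (∑ e : M.E, angle e) - Real.pi * ((Fintype.card M.E : ℝ) - n - 2 * Fintype.card M.F) := by
    unfold PMap.faceCurvA
    rw [Finset.sum_sub_distrib, hS_faces, ← Finset.mul_sum, Finset.sum_sub_distrib, hdeg,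
      Finset.sum_const, Finset.card_univ, nsmul_eq_mul]
    ring
  have hIv : ∑ o : M.V, M.vertCurvA angle o
      = (2 * (Fintype.card M.V : ℝ) - n) * Real.pi - ∑ e : M.E, angle e := by
    unfold PMap.vertCurvA
    rw [Finset.sum_sub_distrib, hS_vert, ← Finset.sum_mul, Finset.sum_sub_distrib, hmult,
      Finset.sum_const, Finset.card_univ, nsmul_eq_mul]
    ring
  have htotal : ∑ f : M.F, M.faceCurvA angle f + ∑ o : M.V, M.vertCurvA angle o
      = 2 * Real.pi := by
    rw [hIf, hIv]; nlinarith [Real.pi_pos]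
  -- split vertex sum into exterior and interior
  have hsplit := Finset.sum_filter_add_sum_filter_not Finset.univ
    (fun o : M.V => M.IsExtV o) (M.vertCurvA angle)
  -- exterior vertex facts
  set k : ℕ := M.extVerts.card with hkdef
  have hkn : k ≤ n := by
    have h1 : (M.boundary.map M.src).toFinset.card ≤ (M.boundary.map M.src).length :=
      (M.boundary.map M.src).toFinset_card_le
    simpa [hkdef, PMap.extVerts, hndef, PMap.perimeter] using h1
  have hfilter : Finset.univ.filter (fun o : M.V => M.IsExtV o) = M.extVerts := by
    ext o; rw [Finset.mem_filter]; exact ⟨fun h => h.2, fun h => ⟨Finset.mem_univ _, h⟩⟩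
  have hmult_ext : ∑ o ∈ M.extVerts, (M.mult o : ℝ) = n := by
    rw [← hmult]
    refine Finset.sum_subset (Finset.subset_univ _) ?_
    intro o _ ho
    have := hmult0 o ho
    simp [this]
  have hvas_nonneg : ∀ o : M.V, 0 ≤ M.vertAngleSum angle o := by
    intro o
    refine Finset.sum_nonneg fun e _ => ?_
    by_cases h : M.tgt e = o <;> simp [h, hnn e]
  have hext_le : ∑ o ∈ Finset.univ.filter (fun o : M.V => M.IsExtV o), M.vertCurvA angle o
      ≤ (n : ℝ) * Real.pi := by
    rw [hfilter]
    unfold PMap.vertCurvA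
    have h1 : ∑ o ∈ M.extVerts, ((2 - (M.mult o : ℝ)) * Real.pi - M.vertAngleSum angle o)
        ≤ ∑ o ∈ M.extVerts, (2 - (M.mult o : ℝ)) * Real.pi := by
      refine Finset.sum_le_sum fun o _ => ?_
      have := hvas_nonneg o; linarith
    have h2 : ∑ o ∈ M.extVerts, (2 - (M.mult o : ℝ)) * Real.pi
        = (2 * k - n) * Real.pi := by
      rw [← Finset.sum_mul]
      congr 1
      rw [Finset.sum_sub_distrib, hmult_ext, Finset.sum_const, nsmul_eq_mul, ← hkdef]
      ring
    have h3 : ((2 : ℝ) * k - n) * Real.pi ≤ (n : ℝ) * Real.pi := by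
      have hk : (k : ℝ) ≤ n := by exact_mod_cast hkn
      nlinarith [Real.pi_pos]
    linarith
  -- conclude
  have hgoal : ∑ f : M.F, M.faceCurvA angle f
      + ∑ o ∈ Finset.univ.filter (fun o : M.V => ¬ M.IsExtV o), M.vertCurvA angle o
      = 2 * Real.pi - ∑ o ∈ Finset.univ.filter (fun o : M.V => M.IsExtV o), M.vertCurvA angle o := by
    linarith [htotal, hsplit]
  rw [ge_iff_le]
  linarith [hext_le, hgoal]
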